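/- Under the class-conditional noise model with flip rates ρ₊ = P(q̃=-1|q=+1) and ρ₋ = P(q̃=+1|q=-1), for any measurable predictor f and clean data distribution D, the expected corrected risk over the noisy distribution equals the clean risk: E_{(X,q̃)∼D_ρ}[ℓ̃(f(X), q̃)] = E_{(X,q)∼D}[ℓ(f(X), q)], where D_ρ is obtained from D by flipping the label +1 to -1 with probability ρ₊ and -1 to +1 with probability ρ₋, independently of X. -/
import Mathlib


open MeasureTheory

/-- The corrected (unbiased) loss, Eq. (16) of the paper. -/
noncomputable def correctedLoss (ℓ : ℝ → ℝ → ℝ) (ρp ρm : ℝ) (t s : ℝ) : ℝ :=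
  ((1 - (if s = 1 then ρm else ρp)) * ℓ t s - (if s = 1 then ρp else ρm) * ℓ t (-s)) /
    (1 - ρp - ρm)

/-- Population unbiasedness (Lemma 1 of Natarajan et al.): `D` is a distribution on
`𝒳 × {+1,-1}` and `D_ρ` flips the label `q` independently of `X` (with probability `ρ₊` if
`q = +1` and `ρ₋` if `q = -1`).  The expected corrected loss under `D_ρ`, i.e. the
`D`-expectation of the conditional noise-expectation
`(1-ρ_q) ℓ̃(f X, q) + ρ_q ℓ̃(f X, -q)`, equals the clean risk `E_D[ℓ(f X, q)]`. -/
theorem stmt_5 {𝒳 : Type*} [MeasurableSpace 𝒳] (D : Measure (𝒳 × ℝ)) [IsProbabilityMeasure D]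
    (ℓ : ℝ → ℝ → ℝ) (f : 𝒳 → ℝ) (ρp ρm : ℝ)
    (hρp : 0 ≤ ρp) (hρm : 0 ≤ ρm) (hsum : ρp + ρm < 1)
    (hlab : ∀ᵐ p ∂D, p.2 = 1 ∨ p.2 = -1)
    (hint : Integrable (fun p : 𝒳 × ℝ => ℓ (f p.1) p.2) D)
    (hint' : Integrable (fun p : 𝒳 × ℝ => ℓ (f p.1) (-p.2)) D) :
    ∫ p : 𝒳 × ℝ,
        ((1 - (if p.2 = 1 then ρp else ρm)) * correctedLoss ℓ ρp ρm (f p.1) p.2 +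
          (if p.2 = 1 then ρp else ρm) * correctedLoss ℓ ρp ρm (f p.1) (-p.2)) ∂D =
      ∫ p : 𝒳 × ℝ, ℓ (f p.1) p.2 ∂D := by
  have hne : 1 - ρp - ρm ≠ 0 := by linarith
  refine integral_congr_ae ?_
  filter_upwards [hlab] with p hp
  rcases hp with h | h <;> simp only [correctedLoss, h] <;> norm_num <;>
    field_simp <;> ring
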